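/- Let C be a deducibility constraint system, θ a solution of C, Ti a left-hand side of a constraint of C, and u a term such that: (1) for every (T ⊩ v) ∈ C with T ⊊ Ti, the term v is a variable; (2) Ti does not contain two distinct non-variable subterms t1, t2 with t1θ = t2θ; (3) Ti does not contain two subterms enca(t1,x) and priv(t2) where x is a variable distinct from t2; (4) Ti does not contain two subterms enca(t1,t2) and priv(x) where x is a variable distinct from t2; (5) u is a non-variable subterm of Ti; and (6) Tiθ ⊢ uθ. Then Ti ∪ {x | (T ⊩ x) ∈ C, T ⊊ Ti} ⊢ u. -/
import Mathlib


open scoped Classical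

/-- Terms built from names, variables, pairing, symmetric/asymmetric encryption,
signatures and private keys. -/
inductive Tm where
  | var : ℕ → Tm
  | name : ℕ → Tm
  | pair : Tm → Tm → Tm
  | enc : Tm → Tm → Tm
  | enca : Tm → Tm → Tm
  | sign : Tm → Tm → Tm
  | priv : Tm → Tm
deriving DecidableEq

namespace Tm

/-- The variables of a term. -/
def vars : Tm → Finset ℕ
  | var x => {x}
  | name _ => ∅
  | pair s t => s.vars ∪ t.vars
  | enc s t => s.vars ∪ t.vars
  | enca s t => s.vars ∪ t.vars
  | sign s t => s.vars ∪ t.vars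
  | priv t => t.vars

/-- The subterms of a term. -/
def subterms : Tm → Finset Tm
  | var x => {var x}
  | name a => {name a}
  | pair s t => insert (pair s t) (s.subterms ∪ t.subterms)
  | enc s t => insert (enc s t) (s.subterms ∪ t.subterms)
  | enca s t => insert (enca s t) (s.subterms ∪ t.subterms)
  | sign s t => insert (sign s t) (s.subterms ∪ t.subterms)
  | priv t => insert (priv t) t.subterms

/-- A term is a variable. -/
def IsVar : Tm → Prop
  | var _ => True
  | _ => False

end Tm

/-- The Dolev-Yao deduction relation `T ⊢ u`. -/
inductive Deduce : Finset Tm → Tm → Prop where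
  | ax {T u} : u ∈ T → Deduce T u
  | pairI {T x y} : Deduce T x → Deduce T y → Deduce T (Tm.pair x y)
  | encI {T x y} : Deduce T x → Deduce T y → Deduce T (Tm.enc x y)
  | encaI {T x y} : Deduce T x → Deduce T y → Deduce T (Tm.enca x y)
  | signI {T x y} : Deduce T x → Deduce T y → Deduce T (Tm.sign x y)
  | encE {T x y} : Deduce T (Tm.enc x y) → Deduce T y → Deduce T x
  | encaE {T x y} : Deduce T (Tm.enca x y) → Deduce T (Tm.priv y) → Deduce T x
  | fstE {T x y} : Deduce T (Tm.pair x y) → Deduce T x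
  | sndE {T x y} : Deduce T (Tm.pair x y) → Deduce T y

/-- Substitutions. -/
def Subst := ℕ → Tm

/-- Applying a substitution to a term. -/
def Tm.subst (σ : Subst) : Tm → Tm
  | .var x => σ x
  | .name a => .name a
  | .pair s t => .pair (s.subst σ) (t.subst σ)
  | .enc s t => .enc (s.subst σ) (t.subst σ)
  | .enca s t => .enca (s.subst σ) (t.subst σ)
  | .sign s t => .sign (s.subst σ) (t.subst σ)
  | .priv t => .priv (t.subst σ)

/-- The identity substitution. -/
def idSubst : Subst := Tm.var

/-- Composition of substitutions: `σ.comp τ` applies `σ` first, then `τ`. -/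
def Subst.comp (σ τ : Subst) : Subst := fun x => (σ x).subst τ

/-- The variables of a finite set of terms. -/
def setVars (T : Finset Tm) : Finset ℕ := T.sup Tm.vars

/-- The subterms of a finite set of terms. -/
def stSet (T : Finset Tm) : Finset Tm := T.sup Tm.subterms

/-- A deducibility constraint `T ⊩ u`: a (nonempty) finite set of terms and a term. -/
abbrev Cst := Finset Tm × Tm

/-- Applying a substitution to a constraint. -/
def conSubst (σ : Subst) (c : Cst) : Cst := (c.1.image (Tm.subst σ), c.2.subst σ)

/-- Applying a substitution to a constraint system. -/
def csSubst (σ : Subst) (S : Finset Cst) : Finset Cst := S.image (conSubst σ)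

/-- The variables of a constraint system. -/
def sysVars (C : Finset Cst) : Finset ℕ := C.sup (fun c => setVars c.1 ∪ c.2.vars)

/-- The set `{x | (T' ⊩ x) ∈ S, T' ⊊ T}` of variables (as terms) occurring as
right-hand sides of constraints of `S` whose left-hand side is strictly contained in `T`. -/
noncomputable def extraVars (S : Finset Cst) (T : Finset Tm) : Finset Tm :=
  (S.filter (fun c => c.1 ⊂ T ∧ c.2.IsVar)).image Prod.snd

/-- `C` is a deducibility constraint system: left-hand sides are nonempty,
totally ordered by inclusion, and every variable of a left-hand side `T` occurs in
the right-hand side of a constraint whose left-hand side is minimal among those whose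
right-hand side contains the variable, and strictly included in `T`. -/
def IsCS (C : Finset Cst) : Prop :=
  (∀ c ∈ C, c.1.Nonempty) ∧
  (∀ c ∈ C, ∀ c' ∈ C, c.1 ⊆ c'.1 ∨ c'.1 ⊆ c.1) ∧
  (∀ c ∈ C, ∀ x ∈ setVars c.1,
    ∃ c' ∈ C, x ∈ c'.2.vars ∧ c'.1 ⊂ c.1 ∧
      ∀ c'' ∈ C, x ∈ c''.2.vars → c'.1 ⊆ c''.1)

/-- A solution of a constraint system: a ground substitution whose domain is `V(C)`
such that `Tθ ⊢ uθ` for every constraint `(T ⊩ u) ∈ C`. -/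
def IsSolution (θ : Subst) (C : Finset Cst) : Prop :=
  (∀ x ∈ sysVars C, (θ x).vars = ∅) ∧
  (∀ x, x ∉ sysVars C → θ x = Tm.var x) ∧
  (∀ c ∈ C, Deduce (c.1.image (Tm.subst θ)) (c.2.subst θ))

/-- A (non-`⊥`) constraint system is solved if all right-hand sides are variables. -/
def Solved (C : Finset Cst) : Prop := ∀ c ∈ C, c.2.IsVar

/-- `σ` is a most general unifier of `t` and `u`. -/
def IsMGU (σ : Subst) (t u : Tm) : Prop :=
  t.subst σ = u.subst σ ∧
  (∀ x, x ∉ t.vars ∪ u.vars → σ x = Tm.var x) ∧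
  (∀ x, (σ x).vars ⊆ t.vars ∪ u.vars) ∧
  (∀ δ : Subst, t.subst δ = u.subst δ → ∃ ρ : Subst, ∀ x, δ x = (σ x).subst ρ)

/-- The binary constructors `pair`, `enc`, `enca`, `sign`. -/
inductive BinOp where
  | pair | enc | enca | sign

def BinOp.app : BinOp → Tm → Tm → Tm
  | .pair => Tm.pair
  | .enc => Tm.enc
  | .enca => Tm.enca
  | .sign => Tm.sign

/-- One step of simplification `C ⇝_σ C'` (result `none` represents `⊥`),
given by the rules R1, R2, R3, R3', R4, Rf. -/
inductive Step : Finset Cst → Subst → Option (Finset Cst) → Prop where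
  | r1 {S : Finset Cst} {T : Finset Tm} {u : Tm} :
      (T, u) ∈ S →
      Deduce (T ∪ extraVars (S.erase (T, u)) T) u →
      Step S idSubst (some (S.erase (T, u)))
  | r2 {S : Finset Cst} {T : Finset Tm} {u t : Tm} {σ : Subst} :
      (T, u) ∈ S → t ∈ stSet T → ¬ t.IsVar → ¬ u.IsVar → t ≠ u →
      IsMGU σ t u →
      Step S σ (some (csSubst σ S))
  | r3 {S : Finset Cst} {T : Finset Tm} {u t₁ t₂ : Tm} {σ : Subst} :
      (T, u) ∈ S → t₁ ∈ stSet T → t₂ ∈ stSet T → ¬ t₁.IsVar → ¬ t₂.IsVar →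
      t₁ ≠ t₂ → IsMGU σ t₁ t₂ →
      Step S σ (some (csSubst σ S))
  | r3' {S : Finset Cst} {T : Finset Tm} {u t₁ t₂ t₃ : Tm} {σ : Subst} :
      (T, u) ∈ S → Tm.enca t₁ t₂ ∈ stSet T → Tm.priv t₃ ∈ stSet T →
      t₂ ≠ t₃ → (t₂.IsVar ∨ t₃.IsVar) → IsMGU σ t₂ t₃ →
      Step S σ (some (csSubst σ S))
  | r4 {S : Finset Cst} {T : Finset Tm} {u : Tm} :
      (T, u) ∈ S → setVars T ∪ u.vars = ∅ → ¬ Deduce T u →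
      Step S idSubst none
  | rf {S : Finset Cst} {T : Finset Tm} {u v : Tm} (b : BinOp) :
      (T, b.app u v) ∈ S →
      Step S idSubst (some (insert (T, u) (insert (T, v) (S.erase (T, b.app u v)))))

/-- Sequences of simplification steps `C ⇝*_σ C'`, composing the substitutions. -/
inductive Steps : Finset Cst → Subst → Option (Finset Cst) → Prop where
  | refl (S) : Steps S idSubst (some S)
  | tail {S : Finset Cst} {σ : Subst} {S' : Finset Cst} {τ : Subst} {R} :
      Steps S σ (some S') → Step S' τ R → Steps S (σ.comp τ) R

/-- A security property, identified with its set of solutions (ground substitutions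
making it true); `θ` solves `φσ` iff `σθ` solves `φ`. -/
def SecProp := Subst → Prop

/-- The instance `φσ` of a security property `φ` by a substitution `σ`. -/
def SecProp.subst (φ : SecProp) (σ : Subst) : SecProp := fun θ => φ (σ.comp θ)

/-- `θ` is an attack for `φ` and `C` if it is a solution of both. -/
def IsAttack (θ : Subst) (C : Finset Cst) (φ : SecProp) : Prop :=
  IsSolution θ C ∧ φ θ

/-- One memorizing simplification step: `C;D ⇒_σ (C' \ D); (D ∪ (C \ C'))`. -/
inductive MStep : Finset Cst × Finset Cst → Subst → Finset Cst × Finset Cst → Prop where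
  | mk {C D C' : Finset Cst} {σ : Subst} :
      Step C σ (some C') → MStep (C, D) σ (C' \ D, D ∪ (C \ C'))

/-- Sequences of memorizing simplification steps, composing the substitutions. -/
inductive MSteps : Finset Cst × Finset Cst → Subst → Finset Cst × Finset Cst → Prop where
  | refl (P) : MSteps P idSubst P
  | tail {P : Finset Cst × Finset Cst} {σ : Subst} {Q : Finset Cst × Finset Cst}
      {τ : Subst} {R : Finset Cst × Finset Cst} :
      MSteps P σ Q → MStep Q τ R → MSteps P (σ.comp τ) R


/-! ### Auxiliary development for `lemma_R1` -/

namespace Tm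

lemma mem_subterms_self (t : Tm) : t ∈ t.subterms := by
  cases t <;> simp [subterms]

lemma subterms_trans : ∀ {u s t : Tm}, s ∈ t.subterms → t ∈ u.subterms → s ∈ u.subterms := by
  intro u
  induction u with
  | var x => intro s t h1 h2; simp only [subterms, Finset.mem_singleton] at h2; subst h2
              ; simpa [subterms] using h1
  | name a => intro s t h1 h2; simp only [subterms, Finset.mem_singleton] at h2; subst h2
              ; simpa [subterms] using h1
  | pair a b iha ihb =>
      intro s t h1 h2
      rcases Finset.mem_insert.1 h2 with rfl | h2'
      · exact h1
      · rcases Finset.mem_union.1 h2' with h | h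
        · exact Finset.mem_insert_of_mem (Finset.mem_union_left _ (iha h1 h))
        · exact Finset.mem_insert_of_mem (Finset.mem_union_right _ (ihb h1 h))
  | enc a b iha ihb =>
      intro s t h1 h2
      rcases Finset.mem_insert.1 h2 with rfl | h2'
      · exact h1
      · rcases Finset.mem_union.1 h2' with h | h
        · exact Finset.mem_insert_of_mem (Finset.mem_union_left _ (iha h1 h))
        · exact Finset.mem_insert_of_mem (Finset.mem_union_right _ (ihb h1 h))
  | enca a b iha ihb =>
      intro s t h1 h2
      rcases Finset.mem_insert.1 h2 with rfl | h2'
      · exact h1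
      · rcases Finset.mem_union.1 h2' with h | h
        · exact Finset.mem_insert_of_mem (Finset.mem_union_left _ (iha h1 h))
        · exact Finset.mem_insert_of_mem (Finset.mem_union_right _ (ihb h1 h))
  | sign a b iha ihb =>
      intro s t h1 h2
      rcases Finset.mem_insert.1 h2 with rfl | h2'
      · exact h1
      · rcases Finset.mem_union.1 h2' with h | h
        · exact Finset.mem_insert_of_mem (Finset.mem_union_left _ (iha h1 h))
        · exact Finset.mem_insert_of_mem (Finset.mem_union_right _ (ihb h1 h))
  | priv a iha =>
      intro s t h1 h2
      rcases Finset.mem_insert.1 h2 with rfl | h2'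
      · exact h1
      · exact Finset.mem_insert_of_mem (iha h1 h2')

lemma vars_subset_of_mem_subterms : ∀ {t s : Tm}, s ∈ t.subterms → s.vars ⊆ t.vars := by
  intro t
  induction t with
  | var x => intro s h; simp only [subterms, Finset.mem_singleton] at h; subst h; exact Finset.Subset.refl _
  | name a => intro s h; simp only [subterms, Finset.mem_singleton] at h; subst h; exact Finset.Subset.refl _
  | pair a b iha ihb =>
      intro s h
      rcases Finset.mem_insert.1 h with rfl | h'
      · exact Finset.Subset.refl _
      · rcases Finset.mem_union.1 h' with h | h
        · exact (iha h).trans Finset.subset_union_left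
        · exact (ihb h).trans Finset.subset_union_right
  | enc a b iha ihb =>
      intro s h
      rcases Finset.mem_insert.1 h with rfl | h'
      · exact Finset.Subset.refl _
      · rcases Finset.mem_union.1 h' with h | h
        · exact (iha h).trans Finset.subset_union_left
        · exact (ihb h).trans Finset.subset_union_right
  | enca a b iha ihb =>
      intro s h
      rcases Finset.mem_insert.1 h with rfl | h'
      · exact Finset.Subset.refl _
      · rcases Finset.mem_union.1 h' with h | h
        · exact (iha h).trans Finset.subset_union_left
        · exact (ihb h).trans Finset.subset_union_right
  | sign a b iha ihb =>
      intro s h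
      rcases Finset.mem_insert.1 h with rfl | h'
      · exact Finset.Subset.refl _
      · rcases Finset.mem_union.1 h' with h | h
        · exact (iha h).trans Finset.subset_union_left
        · exact (ihb h).trans Finset.subset_union_right
  | priv a iha =>
      intro s h
      rcases Finset.mem_insert.1 h with rfl | h'
      · exact Finset.Subset.refl _
      · exact iha h'

end Tm

lemma mem_stSet_self {T : Finset Tm} {t : Tm} (h : t ∈ T) : t ∈ stSet T :=
  Finset.mem_sup.2 ⟨t, h, Tm.mem_subterms_self t⟩

lemma stSet_mono {T U : Finset Tm} (h : T ⊆ U) : stSet T ⊆ stSet U :=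
  Finset.le_iff_subset.mp (Finset.sup_mono h)

lemma stSet_trans {T : Finset Tm} {s t : Tm} (hs : s ∈ t.subterms) (ht : t ∈ stSet T) :
    s ∈ stSet T := by
  obtain ⟨v, hv, htv⟩ := Finset.mem_sup.1 ht
  exact Finset.mem_sup.2 ⟨v, hv, Tm.subterms_trans hs htv⟩

lemma vars_subset_setVars {T : Finset Tm} {t : Tm} (h : t ∈ stSet T) :
    t.vars ⊆ setVars T := by
  obtain ⟨v, hv, htv⟩ := Finset.mem_sup.1 h
  exact (Tm.vars_subset_of_mem_subterms htv).trans (Finset.le_iff_subset.mp (Finset.le_sup hv))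

lemma pair_left_mem {T : Finset Tm} {a b : Tm} (h : Tm.pair a b ∈ stSet T) : a ∈ stSet T :=
  stSet_trans (by simp [Tm.subterms, Tm.mem_subterms_self]) h
lemma pair_right_mem {T : Finset Tm} {a b : Tm} (h : Tm.pair a b ∈ stSet T) : b ∈ stSet T :=
  stSet_trans (by simp [Tm.subterms, Tm.mem_subterms_self]) h
lemma enc_left_mem {T : Finset Tm} {a b : Tm} (h : Tm.enc a b ∈ stSet T) : a ∈ stSet T :=
  stSet_trans (by simp [Tm.subterms, Tm.mem_subterms_self]) h
lemma enc_right_mem {T : Finset Tm} {a b : Tm} (h : Tm.enc a b ∈ stSet T) : b ∈ stSet T :=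
  stSet_trans (by simp [Tm.subterms, Tm.mem_subterms_self]) h
lemma enca_left_mem {T : Finset Tm} {a b : Tm} (h : Tm.enca a b ∈ stSet T) : a ∈ stSet T :=
  stSet_trans (by simp [Tm.subterms, Tm.mem_subterms_self]) h
lemma enca_right_mem {T : Finset Tm} {a b : Tm} (h : Tm.enca a b ∈ stSet T) : b ∈ stSet T :=
  stSet_trans (by simp [Tm.subterms, Tm.mem_subterms_self]) h
lemma sign_left_mem {T : Finset Tm} {a b : Tm} (h : Tm.sign a b ∈ stSet T) : a ∈ stSet T :=
  stSet_trans (by simp [Tm.subterms, Tm.mem_subterms_self]) h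
lemma sign_right_mem {T : Finset Tm} {a b : Tm} (h : Tm.sign a b ∈ stSet T) : b ∈ stSet T :=
  stSet_trans (by simp [Tm.subterms, Tm.mem_subterms_self]) h
lemma priv_mem {T : Finset Tm} {a : Tm} (h : Tm.priv a ∈ stSet T) : a ∈ stSet T :=
  stSet_trans (by simp [Tm.subterms, Tm.mem_subterms_self]) h

/-- Analysis (`b = false`) and synthesis (`b = true`) fragments of Dolev-Yao deduction. -/
inductive AnaSyn (T : Finset Tm) : Bool → Tm → Prop where
  | ax {u} : u ∈ T → AnaSyn T false u
  | fst {x y} : AnaSyn T false (Tm.pair x y) → AnaSyn T false x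
  | snd {x y} : AnaSyn T false (Tm.pair x y) → AnaSyn T false y
  | encD {x y} : AnaSyn T false (Tm.enc x y) → AnaSyn T true y → AnaSyn T false x
  | encaD {x y} : AnaSyn T false (Tm.enca x y) → AnaSyn T true (Tm.priv y) → AnaSyn T false x
  | up {u} : AnaSyn T false u → AnaSyn T true u
  | pairC {x y} : AnaSyn T true x → AnaSyn T true y → AnaSyn T true (Tm.pair x y)
  | encC {x y} : AnaSyn T true x → AnaSyn T true y → AnaSyn T true (Tm.enc x y)
  | encaC {x y} : AnaSyn T true x → AnaSyn T true y → AnaSyn T true (Tm.enca x y)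
  | signC {x y} : AnaSyn T true x → AnaSyn T true y → AnaSyn T true (Tm.sign x y)

abbrev Syn (T : Finset Tm) (u : Tm) : Prop := AnaSyn T true u

lemma syn_fst {T : Finset Tm} {x y : Tm} (h : Syn T (Tm.pair x y)) : Syn T x := by
  cases h with
  | up h' => exact AnaSyn.up (AnaSyn.fst h')
  | pairC hx hy => exact hx

lemma syn_snd {T : Finset Tm} {x y : Tm} (h : Syn T (Tm.pair x y)) : Syn T y := by
  cases h with
  | up h' => exact AnaSyn.up (AnaSyn.snd h')
  | pairC hx hy => exact hy

lemma syn_encD {T : Finset Tm} {x y : Tm} (h : Syn T (Tm.enc x y)) (hk : Syn T y) :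
    Syn T x := by
  cases h with
  | up h' => exact AnaSyn.up (AnaSyn.encD h' hk)
  | encC hx hy => exact hx

lemma syn_encaD {T : Finset Tm} {x y : Tm} (h : Syn T (Tm.enca x y))
    (hk : Syn T (Tm.priv y)) : Syn T x := by
  cases h with
  | up h' => exact AnaSyn.up (AnaSyn.encaD h' hk)
  | encaC hx hy => exact hx

lemma syn_of_deduce {T : Finset Tm} {u : Tm} (h : Deduce T u) : Syn T u := by
  induction h with
  | ax h => exact AnaSyn.up (AnaSyn.ax h)
  | pairI _ _ ihx ihy => exact AnaSyn.pairC ihx ihy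
  | encI _ _ ihx ihy => exact AnaSyn.encC ihx ihy
  | encaI _ _ ihx ihy => exact AnaSyn.encaC ihx ihy
  | signI _ _ ihx ihy => exact AnaSyn.signC ihx ihy
  | encE _ _ ih ihk => exact syn_encD ih ihk
  | encaE _ _ ih ihk => exact syn_encaD ih ihk
  | fstE _ ih => exact syn_fst ih
  | sndE _ ih => exact syn_snd ih

/-- Substitution-image of a set of terms. -/
abbrev img (θ : Subst) (T : Finset Tm) : Finset Tm := T.image (Tm.subst θ)

lemma subst_eq_pair {θ : Subst} {t a b : Tm} (h : t.subst θ = Tm.pair a b) :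
    (∃ z, t = Tm.var z ∧ θ z = Tm.pair a b) ∨
    ∃ t1 t2, t = Tm.pair t1 t2 ∧ t1.subst θ = a ∧ t2.subst θ = b := by
  cases t <;> simp_all [Tm.subst] <;> exact ⟨_, _, ⟨rfl, rfl⟩, h.1, h.2⟩

lemma subst_eq_enc {θ : Subst} {t a b : Tm} (h : t.subst θ = Tm.enc a b) :
    (∃ z, t = Tm.var z ∧ θ z = Tm.enc a b) ∨
    ∃ t1 t2, t = Tm.enc t1 t2 ∧ t1.subst θ = a ∧ t2.subst θ = b := by
  cases t <;> simp_all [Tm.subst] <;> exact ⟨_, _, ⟨rfl, rfl⟩, h.1, h.2⟩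

lemma subst_eq_enca {θ : Subst} {t a b : Tm} (h : t.subst θ = Tm.enca a b) :
    (∃ z, t = Tm.var z ∧ θ z = Tm.enca a b) ∨
    ∃ t1 t2, t = Tm.enca t1 t2 ∧ t1.subst θ = a ∧ t2.subst θ = b := by
  cases t <;> simp_all [Tm.subst] <;> exact ⟨_, _, ⟨rfl, rfl⟩, h.1, h.2⟩

lemma subst_eq_sign {θ : Subst} {t a b : Tm} (h : t.subst θ = Tm.sign a b) :
    (∃ z, t = Tm.var z ∧ θ z = Tm.sign a b) ∨
    ∃ t1 t2, t = Tm.sign t1 t2 ∧ t1.subst θ = a ∧ t2.subst θ = b := by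
  cases t <;> simp_all [Tm.subst] <;> exact ⟨_, _, ⟨rfl, rfl⟩, h.1, h.2⟩

lemma subst_eq_priv {θ : Subst} {t a : Tm} (h : t.subst θ = Tm.priv a) :
    (∃ z, t = Tm.var z ∧ θ z = Tm.priv a) ∨
    ∃ t1, t = Tm.priv t1 ∧ t1.subst θ = a := by
  cases t <;> simp_all [Tm.subst]

lemma isVar_eq {t : Tm} {z : ℕ} (h : t.IsVar) (hz : z ∈ t.vars) : t = Tm.var z := by
  cases t <;> simp_all [Tm.IsVar, Tm.vars]

lemma isVar_exists {t : Tm} (h : t.IsVar) : ∃ z, t = Tm.var z := by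
  cases t <;> simp_all [Tm.IsVar]

lemma not_isVar_pair (a b : Tm) : ¬ (Tm.pair a b).IsVar := fun h => h
lemma not_isVar_enc (a b : Tm) : ¬ (Tm.enc a b).IsVar := fun h => h
lemma not_isVar_enca (a b : Tm) : ¬ (Tm.enca a b).IsVar := fun h => h
lemma not_isVar_sign (a b : Tm) : ¬ (Tm.sign a b).IsVar := fun h => h
lemma not_isVar_priv (a : Tm) : ¬ (Tm.priv a).IsVar := fun h => h

noncomputable def XSet (C : Finset Cst) (Ti : Finset Tm) : Finset Tm := Ti ∪ extraVars C Ti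

/-- Target property for synthesized terms. -/
def SynPr (C : Finset Cst) (θ : Subst) (Ti : Finset Tm) (s : Tm) : Prop :=
  ∀ u : Tm, ¬ u.IsVar → u ∈ stSet Ti → u.subst θ = s → Deduce (XSet C Ti) u

/-- Information about synthesized private keys. -/
def PrivPr (C : Finset Cst) (θ : Subst) (Ti : Finset Tm) (s : Tm) : Prop :=
  ∀ k : Tm, s = Tm.priv k →
    ∃ t', Tm.priv t' ∈ stSet Ti ∧ t'.subst θ = k ∧ Deduce (XSet C Ti) (Tm.priv t')

def DOne (C : Finset Cst) (θ : Subst) (Ti T : Finset Tm) (s : Tm) : Prop :=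
  ∃ t ∈ stSet T, t.subst θ = s ∧ (¬ t.IsVar → Deduce (XSet C Ti) t)

def DTwo (C : Finset Cst) (θ : Subst) (T : Finset Tm) (s : Tm) : Prop :=
  ∃ p : Cst, p ∈ C ∧ p.1 ⊂ T ∧ Syn (img θ p.1) s

def HPriv (C : Finset Cst) (θ : Subst) (Ti T : Finset Tm) : Prop :=
  ∀ k : Tm, Syn (img θ T) (Tm.priv k) →
    ∃ t', Tm.priv t' ∈ stSet Ti ∧ t'.subst θ = k ∧ Deduce (XSet C Ti) (Tm.priv t')

def HEnc (C : Finset Cst) (θ : Subst) (Ti T : Finset Tm) : Prop :=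
  ∀ s1 k : Tm, Syn (img θ T) (Tm.enc s1 k) → SynPr C θ Ti k →
    (∃ t1 ∈ stSet T, t1.subst θ = s1 ∧ (¬ t1.IsVar → Deduce (XSet C Ti) t1)) ∨
    (∃ p : Cst, p ∈ C ∧ p.1 ⊆ T ∧ Syn (img θ p.1) s1)

def HEnca (C : Finset Cst) (θ : Subst) (Ti T : Finset Tm) : Prop :=
  ∀ s1 k : Tm, Syn (img θ T) (Tm.enca s1 k) →
    (∃ t', Tm.priv t' ∈ stSet Ti ∧ t'.subst θ = k ∧ Deduce (XSet C Ti) (Tm.priv t')) →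
    (∃ t1 ∈ stSet T, t1.subst θ = s1 ∧ (¬ t1.IsVar → Deduce (XSet C Ti) t1)) ∨
    (∃ p : Cst, p ∈ C ∧ p.1 ⊆ T ∧ Syn (img θ p.1) s1)

def BIG (C : Finset Cst) (θ : Subst) (Ti T : Finset Tm) : Prop :=
  (∀ (b : Bool) (s : Tm), AnaSyn (img θ T) b s →
     (b = false → DOne C θ Ti T s ∨ DTwo C θ T s) ∧
     (b = true → SynPr C θ Ti s ∧ PrivPr C θ Ti s)) ∧
  HPriv C θ Ti T ∧ HEnc C θ Ti T ∧ HEnca C θ Ti T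

/-- Every variable of `Ti` occurs (as a term) in `extraVars C Ti`. -/
lemma varX (C : Finset Cst) (hC : IsCS C) (Ti : Finset Tm) (w : Tm) (hTi : (Ti, w) ∈ C)
    (h1 : ∀ c ∈ C, c.1 ⊂ Ti → c.2.IsVar) :
    ∀ x ∈ setVars Ti, Tm.var x ∈ extraVars C Ti := by
  intro x hx
  obtain ⟨c', hc', hxc', hlt, -⟩ := hC.2.2 (Ti, w) hTi x hx
  have hv : c'.2.IsVar := h1 c' hc' hlt
  have he : c'.2 = Tm.var x := isVar_eq hv hxc'
  unfold extraVars
  refine Finset.mem_image.2 ⟨c', Finset.mem_filter.2 ⟨hc', hlt, hv⟩, he⟩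

/-- For every variable of a left-hand side `T ⊆ Ti`, there is a strictly smaller
constraint with right-hand side that very variable, and `θ x` is deducible there. -/
lemma below (C : Finset Cst) (hC : IsCS C) (θ : Subst) (hθ : IsSolution θ C)
    (Ti : Finset Tm) (h1 : ∀ c ∈ C, c.1 ⊂ Ti → c.2.IsVar)
    (T : Finset Tm) (r : Tm) (hTr : (T, r) ∈ C) (hTsub : T ⊆ Ti)
    (x : ℕ) (hx : x ∈ setVars T) :
    ∃ p : Cst, p ∈ C ∧ p.1 ⊂ T ∧ p.2 = Tm.var x ∧ Deduce (img θ p.1) (θ x) := by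
  obtain ⟨c', hc', hxc', hlt, -⟩ := hC.2.2 (T, r) hTr x hx
  have hv : c'.2.IsVar := h1 c' hc' (lt_of_lt_of_le hlt (Finset.le_iff_subset.2 hTsub))
  have he : c'.2 = Tm.var x := isVar_eq hv hxc'
  have hd := hθ.2.2 c' hc'
  rw [he] at hd
  exact ⟨c', hc', hlt, he, hd⟩

/-- Agreement of asymmetric keys, from hypotheses (2)-(4). -/
lemma keyEq (θ : Subst) (Ti : Finset Tm)
    (h2 : ∀ t₁ ∈ stSet Ti, ∀ t₂ ∈ stSet Ti,
      ¬ t₁.IsVar → ¬ t₂.IsVar → t₁.subst θ = t₂.subst θ → t₁ = t₂)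
    (h3 : ∀ (t₁ : Tm) (x : ℕ) (t₂ : Tm),
      Tm.enca t₁ (Tm.var x) ∈ stSet Ti → Tm.priv t₂ ∈ stSet Ti → Tm.var x = t₂)
    (h4 : ∀ (t₁ t₂ : Tm) (x : ℕ),
      Tm.enca t₁ t₂ ∈ stSet Ti → Tm.priv (Tm.var x) ∈ stSet Ti → Tm.var x = t₂)
    {t1 t2 t' : Tm} (ha : Tm.enca t1 t2 ∈ stSet Ti) (hp : Tm.priv t' ∈ stSet Ti)
    (heq : t2.subst θ = t'.subst θ) : t2 = t' := by
  by_cases hv2 : t2.IsVar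
  · obtain ⟨z, hz⟩ : ∃ z, t2 = Tm.var z := by
      cases t2 <;> simp_all [Tm.IsVar]
    subst hz
    exact h3 t1 z t' ha hp
  · by_cases hv' : t'.IsVar
    · obtain ⟨z, hz⟩ : ∃ z, t' = Tm.var z := by
        cases t' <;> simp_all [Tm.IsVar]
      subst hz
      exact (h4 t1 t2 z ha hp).symm
    · exact h2 t2 (enca_right_mem ha) t' (priv_mem hp) hv2 hv' heq

lemma key (C : Finset Cst) (hC : IsCS C) (θ : Subst) (hθ : IsSolution θ C)
    (Ti : Finset Tm) (w : Tm) (hTi : (Ti, w) ∈ C)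
    (h1 : ∀ c ∈ C, c.1 ⊂ Ti → c.2.IsVar)
    (h2 : ∀ t₁ ∈ stSet Ti, ∀ t₂ ∈ stSet Ti,
      ¬ t₁.IsVar → ¬ t₂.IsVar → t₁.subst θ = t₂.subst θ → t₁ = t₂)
    (h3 : ∀ (t₁ : Tm) (x : ℕ) (t₂ : Tm),
      Tm.enca t₁ (Tm.var x) ∈ stSet Ti → Tm.priv t₂ ∈ stSet Ti → Tm.var x = t₂)
    (h4 : ∀ (t₁ t₂ : Tm) (x : ℕ),
      Tm.enca t₁ t₂ ∈ stSet Ti → Tm.priv (Tm.var x) ∈ stSet Ti → Tm.var x = t₂) :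
    ∀ (n : ℕ) (T : Finset Tm) (r : Tm), (T, r) ∈ C → T ⊆ Ti → T.card ≤ n →
      BIG C θ Ti T := by
  intro n
  induction n with
  | zero =>
      intro T r hTr hTsub hcard
      obtain ⟨t, ht⟩ := hC.1 (T, r) hTr
      have h0 : 0 < T.card := Finset.card_pos.2 ⟨t, ht⟩
      exact absurd hcard (by omega)
  | succ n ih =>
      intro T r hTr hTsub hcard
      -- useful facts
      have hX : ∀ x ∈ setVars Ti, Deduce (XSet C Ti) (Tm.var x) := by
        intro x hx
        exact Deduce.ax (Finset.mem_union_right _ (varX C hC Ti w hTi h1 x hx))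
      have hTX : ∀ t ∈ T, Deduce (XSet C Ti) t := by
        intro t ht
        exact Deduce.ax (Finset.mem_union_left _ (hTsub ht))
      have hstT : stSet T ⊆ stSet Ti := stSet_mono hTsub
      have hsetT : setVars T ⊆ setVars Ti := Finset.le_iff_subset.mp (Finset.sup_mono hTsub)
      have hbelow := below C hC θ hθ Ti h1 T r hTr hTsub
      have ihlt : ∀ (p : Cst), p ∈ C → p.1 ⊂ T → BIG C θ Ti p.1 := by
        intro p hp hlt
        exact ih p.1 p.2 hp (hlt.subset.trans hTsub)
          (by have := Finset.card_lt_card hlt; omega)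
      -- variable-in-stSet gives a smaller constraint
      have hvarst : ∀ (z : ℕ), Tm.var z ∈ stSet T → z ∈ setVars T := by
        intro z hz
        exact vars_subset_setVars hz (by simp [Tm.vars])
      -- main derivation induction
      have DI : ∀ (b : Bool) (s : Tm), AnaSyn (img θ T) b s →
          (b = false → DOne C θ Ti T s ∨ DTwo C θ T s) ∧
          (b = true → SynPr C θ Ti s ∧ PrivPr C θ Ti s) := by
        intro b s h
        induction h with
        | @ax u hu =>
            refine ⟨fun _ => ?_, fun h => Bool.noConfusion h⟩
            obtain ⟨v, hv, hveq⟩ := Finset.mem_image.1 hu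
            exact Or.inl ⟨v, mem_stSet_self hv, hveq, fun _ => hTX v hv⟩
        | @fst x y hpre ihp =>
            refine ⟨fun _ => ?_, fun h => Bool.noConfusion h⟩
            rcases ihp.1 rfl with ⟨t₀, ht₀T, ht₀e, ht₀d⟩ | ⟨p, hp, hlt, hsyn⟩
            · rcases subst_eq_pair ht₀e with ⟨z, rfl, hz⟩ | ⟨t1, t2, rfl, he1, he2⟩
              · obtain ⟨p, hp, hlt, -, hd⟩ := hbelow z (hvarst z ht₀T)
                refine Or.inr ⟨p, hp, hlt, ?_⟩
                rw [hz] at hd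
                exact syn_fst (syn_of_deduce hd)
              · refine Or.inl ⟨t1, pair_left_mem ht₀T, he1, fun hv => ?_⟩
                exact Deduce.fstE (ht₀d (not_isVar_pair _ _))
            · exact Or.inr ⟨p, hp, hlt, syn_fst hsyn⟩
        | @snd x y hpre ihp =>
            refine ⟨fun _ => ?_, fun h => Bool.noConfusion h⟩
            rcases ihp.1 rfl with ⟨t₀, ht₀T, ht₀e, ht₀d⟩ | ⟨p, hp, hlt, hsyn⟩
            · rcases subst_eq_pair ht₀e with ⟨z, rfl, hz⟩ | ⟨t1, t2, rfl, he1, he2⟩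
              · obtain ⟨p, hp, hlt, -, hd⟩ := hbelow z (hvarst z ht₀T)
                refine Or.inr ⟨p, hp, hlt, ?_⟩
                rw [hz] at hd
                exact syn_snd (syn_of_deduce hd)
              · refine Or.inl ⟨t2, pair_right_mem ht₀T, he2, fun hv => ?_⟩
                exact Deduce.sndE (ht₀d (not_isVar_pair _ _))
            · exact Or.inr ⟨p, hp, hlt, syn_snd hsyn⟩
        | @encD x y hpre hkey ihp ihk =>
            refine ⟨fun _ => ?_, fun h => Bool.noConfusion h⟩
            have hkSyn : SynPr C θ Ti y := (ihk.2 rfl).1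
            have lift : (∃ t1 ∈ stSet T, t1.subst θ = x ∧
                  (¬ t1.IsVar → Deduce (XSet C Ti) t1)) ∨
                (∃ p : Cst, p ∈ C ∧ p.1 ⊂ T ∧ Syn (img θ p.1) x) →
                DOne C θ Ti T x ∨ DTwo C θ T x := fun h => h
            rcases ihp.1 rfl with ⟨t₀, ht₀T, ht₀e, ht₀d⟩ | ⟨p, hp, hlt, hsyn⟩
            · rcases subst_eq_enc ht₀e with ⟨z, rfl, hz⟩ | ⟨t1, t2, rfl, he1, he2⟩
              · obtain ⟨p, hp, hlt, -, hd⟩ := hbelow z (hvarst z ht₀T)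
                rw [hz] at hd
                rcases (ihlt p hp hlt).2.2.1 x y (syn_of_deduce hd) hkSyn with
                  ⟨t1, ht1, he1, hd1⟩ | ⟨q, hq, hsub, hsyn⟩
                · exact Or.inl ⟨t1, stSet_mono hlt.subset ht1, he1, hd1⟩
                · exact Or.inr ⟨q, hq, lt_of_le_of_lt (Finset.le_iff_subset.2 hsub) hlt, hsyn⟩
              · refine Or.inl ⟨t1, enc_left_mem ht₀T, he1, fun hv => ?_⟩
                have hdt₀ : Deduce (XSet C Ti) (Tm.enc t1 t2) := ht₀d (not_isVar_enc _ _)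
                have hdt2 : Deduce (XSet C Ti) t2 := by
                  by_cases hv2 : t2.IsVar
                  · obtain ⟨z, rfl⟩ := isVar_exists (t := t2) (by assumption)
                    exact hX z (hsetT (hvarst z (enc_right_mem ht₀T)))
                  · exact hkSyn t2 hv2 (hstT (enc_right_mem ht₀T)) he2
                exact Deduce.encE hdt₀ hdt2
            · rcases (ihlt p hp hlt).2.2.1 x y hsyn hkSyn with
                  ⟨t1, ht1, he1, hd1⟩ | ⟨q, hq, hsub, hsyn'⟩
              · exact Or.inl ⟨t1, stSet_mono hlt.subset ht1, he1, hd1⟩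
              · exact Or.inr ⟨q, hq, lt_of_le_of_lt (Finset.le_iff_subset.2 hsub) hlt, hsyn'⟩
        | @encaD x y hpre hkey ihp ihk =>
            refine ⟨fun _ => ?_, fun h => Bool.noConfusion h⟩
            have hkP : ∃ t', Tm.priv t' ∈ stSet Ti ∧ t'.subst θ = y ∧
                Deduce (XSet C Ti) (Tm.priv t') := (ihk.2 rfl).2 y rfl
            rcases ihp.1 rfl with ⟨t₀, ht₀T, ht₀e, ht₀d⟩ | ⟨p, hp, hlt, hsyn⟩
            · rcases subst_eq_enca ht₀e with ⟨z, rfl, hz⟩ | ⟨t1, t2, rfl, he1, he2⟩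
              · obtain ⟨p, hp, hlt, -, hd⟩ := hbelow z (hvarst z ht₀T)
                rw [hz] at hd
                rcases (ihlt p hp hlt).2.2.2 x y (syn_of_deduce hd) hkP with
                  ⟨t1, ht1, he1, hd1⟩ | ⟨q, hq, hsub, hsyn⟩
                · exact Or.inl ⟨t1, stSet_mono hlt.subset ht1, he1, hd1⟩
                · exact Or.inr ⟨q, hq, lt_of_le_of_lt (Finset.le_iff_subset.2 hsub) hlt, hsyn⟩
              · refine Or.inl ⟨t1, enca_left_mem ht₀T, he1, fun hv => ?_⟩
                have hdt₀ : Deduce (XSet C Ti) (Tm.enca t1 t2) := ht₀d (not_isVar_enca _ _)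
                obtain ⟨t', ht'st, ht'e, ht'd⟩ := hkP
                have ht2 : t2 = t' := keyEq θ Ti h2 h3 h4 (hstT ht₀T) ht'st
                  (by rw [he2, ht'e])
                rw [← ht2] at ht'd
                exact Deduce.encaE hdt₀ ht'd
            · rcases (ihlt p hp hlt).2.2.2 x y hsyn hkP with
                  ⟨t1, ht1, he1, hd1⟩ | ⟨q, hq, hsub, hsyn'⟩
              · exact Or.inl ⟨t1, stSet_mono hlt.subset ht1, he1, hd1⟩
              · exact Or.inr ⟨q, hq, lt_of_le_of_lt (Finset.le_iff_subset.2 hsub) hlt, hsyn'⟩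
        | @up u hpre ihp =>
            refine ⟨fun h => Bool.noConfusion h, fun _ => ⟨?_, ?_⟩⟩
            · -- SynPr
              intro u' hu'v hu'st hu'e
              rcases ihp.1 rfl with ⟨t₀, ht₀T, ht₀e, ht₀d⟩ | ⟨p, hp, hlt, hsyn⟩
              · by_cases hv : t₀.IsVar
                · obtain ⟨z, rfl⟩ := isVar_exists (t := t₀) (by assumption)
                  obtain ⟨p, hp, hlt, -, hd⟩ := hbelow z (hvarst z ht₀T)
                  have : (Tm.var z).subst θ = θ z := rfl
                  rw [this] at ht₀e
                  rw [ht₀e] at hd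
                  exact ((ihlt p hp hlt).1 true (u'.subst θ)
                    (by rw [hu'e]; exact syn_of_deduce hd)).2 rfl |>.1 u' hu'v hu'st rfl
                · have : u' = t₀ := h2 u' hu'st t₀ (hstT ht₀T) hu'v hv (by rw [hu'e, ht₀e])
                  rw [this]; exact ht₀d hv
              · exact ((ihlt p hp hlt).1 true (u'.subst θ)
                  (by rw [hu'e]; exact hsyn)).2 rfl |>.1 u' hu'v hu'st rfl
            · -- PrivPr
              intro k hk
              subst hk
              rcases ihp.1 rfl with ⟨t₀, ht₀T, ht₀e, ht₀d⟩ | ⟨p, hp, hlt, hsyn⟩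
              · rcases subst_eq_priv ht₀e with ⟨z, rfl, hz⟩ | ⟨t1, rfl, he1⟩
                · obtain ⟨p, hp, hlt, -, hd⟩ := hbelow z (hvarst z ht₀T)
                  rw [hz] at hd
                  exact (ihlt p hp hlt).2.1 k (syn_of_deduce hd)
                · exact ⟨t1, hstT ht₀T, he1, ht₀d (not_isVar_priv _)⟩
              · exact (ihlt p hp hlt).2.1 k hsyn
        | @pairC x y hx hy ihx ihy =>
            refine ⟨fun h => Bool.noConfusion h, fun _ => ⟨?_, fun k hk => Tm.noConfusion hk⟩⟩
            intro u hv hust hue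
            rcases subst_eq_pair hue with ⟨z, rfl, hz⟩ | ⟨u1, u2, rfl, he1, he2⟩
            · exact absurd trivial hv
            · have hd1 : Deduce (XSet C Ti) u1 := by
                by_cases hv1 : u1.IsVar
                · obtain ⟨z, rfl⟩ := isVar_exists (t := u1) (by assumption)
                  exact hX z (vars_subset_setVars (pair_left_mem hust) (by simp [Tm.vars]))
                · exact (ihx.2 rfl).1 u1 hv1 (pair_left_mem hust) he1
              have hd2 : Deduce (XSet C Ti) u2 := by
                by_cases hv2 : u2.IsVar
                · obtain ⟨z, rfl⟩ := isVar_exists (t := u2) (by assumption)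
                  exact hX z (vars_subset_setVars (pair_right_mem hust) (by simp [Tm.vars]))
                · exact (ihy.2 rfl).1 u2 hv2 (pair_right_mem hust) he2
              exact Deduce.pairI hd1 hd2
        | @encC x y hx hy ihx ihy =>
            refine ⟨fun h => Bool.noConfusion h, fun _ => ⟨?_, fun k hk => Tm.noConfusion hk⟩⟩
            intro u hv hust hue
            rcases subst_eq_enc hue with ⟨z, rfl, hz⟩ | ⟨u1, u2, rfl, he1, he2⟩
            · exact absurd trivial hv
            · have hd1 : Deduce (XSet C Ti) u1 := by
                by_cases hv1 : u1.IsVar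
                · obtain ⟨z, rfl⟩ := isVar_exists (t := u1) (by assumption)
                  exact hX z (vars_subset_setVars (enc_left_mem hust) (by simp [Tm.vars]))
                · exact (ihx.2 rfl).1 u1 hv1 (enc_left_mem hust) he1
              have hd2 : Deduce (XSet C Ti) u2 := by
                by_cases hv2 : u2.IsVar
                · obtain ⟨z, rfl⟩ := isVar_exists (t := u2) (by assumption)
                  exact hX z (vars_subset_setVars (enc_right_mem hust) (by simp [Tm.vars]))
                · exact (ihy.2 rfl).1 u2 hv2 (enc_right_mem hust) he2
              exact Deduce.encI hd1 hd2
        | @encaC x y hx hy ihx ihy =>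
            refine ⟨fun h => Bool.noConfusion h, fun _ => ⟨?_, fun k hk => Tm.noConfusion hk⟩⟩
            intro u hv hust hue
            rcases subst_eq_enca hue with ⟨z, rfl, hz⟩ | ⟨u1, u2, rfl, he1, he2⟩
            · exact absurd trivial hv
            · have hd1 : Deduce (XSet C Ti) u1 := by
                by_cases hv1 : u1.IsVar
                · obtain ⟨z, rfl⟩ := isVar_exists (t := u1) (by assumption)
                  exact hX z (vars_subset_setVars (enca_left_mem hust) (by simp [Tm.vars]))
                · exact (ihx.2 rfl).1 u1 hv1 (enca_left_mem hust) he1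
              have hd2 : Deduce (XSet C Ti) u2 := by
                by_cases hv2 : u2.IsVar
                · obtain ⟨z, rfl⟩ := isVar_exists (t := u2) (by assumption)
                  exact hX z (vars_subset_setVars (enca_right_mem hust) (by simp [Tm.vars]))
                · exact (ihy.2 rfl).1 u2 hv2 (enca_right_mem hust) he2
              exact Deduce.encaI hd1 hd2
        | @signC x y hx hy ihx ihy =>
            refine ⟨fun h => Bool.noConfusion h, fun _ => ⟨?_, fun k hk => Tm.noConfusion hk⟩⟩
            intro u hv hust hue
            rcases subst_eq_sign hue with ⟨z, rfl, hz⟩ | ⟨u1, u2, rfl, he1, he2⟩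
            · exact absurd trivial hv
            · have hd1 : Deduce (XSet C Ti) u1 := by
                by_cases hv1 : u1.IsVar
                · obtain ⟨z, rfl⟩ := isVar_exists (t := u1) (by assumption)
                  exact hX z (vars_subset_setVars (sign_left_mem hust) (by simp [Tm.vars]))
                · exact (ihx.2 rfl).1 u1 hv1 (sign_left_mem hust) he1
              have hd2 : Deduce (XSet C Ti) u2 := by
                by_cases hv2 : u2.IsVar
                · obtain ⟨z, rfl⟩ := isVar_exists (t := u2) (by assumption)
                  exact hX z (vars_subset_setVars (sign_right_mem hust) (by simp [Tm.vars]))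
                · exact (ihy.2 rfl).1 u2 hv2 (sign_right_mem hust) he2
              exact Deduce.signI hd1 hd2
      refine ⟨DI, ?_, ?_, ?_⟩
      · -- HPriv
        intro k hsyn
        exact (DI true (Tm.priv k) hsyn).2 rfl |>.2 k rfl
      · -- HEnc
        intro s1 k hsyn hkSyn
        cases hsyn with
        | up h' =>
            rcases (DI false (Tm.enc s1 k) h').1 rfl with
              ⟨t₀, ht₀T, ht₀e, ht₀d⟩ | ⟨p, hp, hlt, hsyn'⟩
            · rcases subst_eq_enc ht₀e with ⟨z, rfl, hz⟩ | ⟨t1, t2, rfl, he1, he2⟩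
              · obtain ⟨p, hp, hlt, -, hd⟩ := hbelow z (hvarst z ht₀T)
                rw [hz] at hd
                rcases (ihlt p hp hlt).2.2.1 s1 k (syn_of_deduce hd) hkSyn with
                  ⟨t1, ht1, he1, hd1⟩ | ⟨q, hq, hsub, hsyn''⟩
                · exact Or.inl ⟨t1, stSet_mono hlt.subset ht1, he1, hd1⟩
                · exact Or.inr ⟨q, hq, hsub.trans hlt.subset, hsyn''⟩
              · refine Or.inl ⟨t1, enc_left_mem ht₀T, he1, fun hv => ?_⟩
                have hdt₀ : Deduce (XSet C Ti) (Tm.enc t1 t2) := ht₀d (not_isVar_enc _ _)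
                have hdt2 : Deduce (XSet C Ti) t2 := by
                  by_cases hv2 : t2.IsVar
                  · obtain ⟨z, rfl⟩ := isVar_exists (t := t2) (by assumption)
                    exact hX z (hsetT (hvarst z (enc_right_mem ht₀T)))
                  · exact hkSyn t2 hv2 (hstT (enc_right_mem ht₀T)) he2
                exact Deduce.encE hdt₀ hdt2
            · rcases (ihlt p hp hlt).2.2.1 s1 k hsyn' hkSyn with
                ⟨t1, ht1, he1, hd1⟩ | ⟨q, hq, hsub, hsyn''⟩
              · exact Or.inl ⟨t1, stSet_mono hlt.subset ht1, he1, hd1⟩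
              · exact Or.inr ⟨q, hq, hsub.trans hlt.subset, hsyn''⟩
        | encC hx hy => exact Or.inr ⟨(T, r), hTr, Finset.Subset.refl T, hx⟩
      · -- HEnca
        intro s1 k hsyn hkP
        cases hsyn with
        | up h' =>
            rcases (DI false (Tm.enca s1 k) h').1 rfl with
              ⟨t₀, ht₀T, ht₀e, ht₀d⟩ | ⟨p, hp, hlt, hsyn'⟩
            · rcases subst_eq_enca ht₀e with ⟨z, rfl, hz⟩ | ⟨t1, t2, rfl, he1, he2⟩
              · obtain ⟨p, hp, hlt, -, hd⟩ := hbelow z (hvarst z ht₀T)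
                rw [hz] at hd
                rcases (ihlt p hp hlt).2.2.2 s1 k (syn_of_deduce hd) hkP with
                  ⟨t1, ht1, he1, hd1⟩ | ⟨q, hq, hsub, hsyn''⟩
                · exact Or.inl ⟨t1, stSet_mono hlt.subset ht1, he1, hd1⟩
                · exact Or.inr ⟨q, hq, hsub.trans hlt.subset, hsyn''⟩
              · refine Or.inl ⟨t1, enca_left_mem ht₀T, he1, fun hv => ?_⟩
                have hdt₀ : Deduce (XSet C Ti) (Tm.enca t1 t2) := ht₀d (not_isVar_enca _ _)
                obtain ⟨t', ht'st, ht'e, ht'd⟩ := hkP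
                have ht2 : t2 = t' := keyEq θ Ti h2 h3 h4 (hstT ht₀T) ht'st
                  (by rw [he2, ht'e])
                rw [← ht2] at ht'd
                exact Deduce.encaE hdt₀ ht'd
            · rcases (ihlt p hp hlt).2.2.2 s1 k hsyn' hkP with
                ⟨t1, ht1, he1, hd1⟩ | ⟨q, hq, hsub, hsyn''⟩
              · exact Or.inl ⟨t1, stSet_mono hlt.subset ht1, he1, hd1⟩
              · exact Or.inr ⟨q, hq, hsub.trans hlt.subset, hsyn''⟩
        | encaC hx hy => exact Or.inr ⟨(T, r), hTr, Finset.Subset.refl T, hx⟩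

/-- under hypotheses (1)–(6), `Ti ∪ {x | (T ⊩ x) ∈ C, T ⊊ Ti} ⊢ u`. -/
theorem lemma_R1 (C : Finset Cst) (hC : IsCS C) (θ : Subst) (hθ : IsSolution θ C)
    (Ti : Finset Tm) (w : Tm) (hTi : (Ti, w) ∈ C)
    (h1 : ∀ c ∈ C, c.1 ⊂ Ti → c.2.IsVar)
    (h2 : ∀ t₁ ∈ stSet Ti, ∀ t₂ ∈ stSet Ti,
      ¬ t₁.IsVar → ¬ t₂.IsVar → t₁.subst θ = t₂.subst θ → t₁ = t₂)
    (h3 : ∀ (t₁ : Tm) (x : ℕ) (t₂ : Tm),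
      Tm.enca t₁ (Tm.var x) ∈ stSet Ti → Tm.priv t₂ ∈ stSet Ti → Tm.var x = t₂)
    (h4 : ∀ (t₁ t₂ : Tm) (x : ℕ),
      Tm.enca t₁ t₂ ∈ stSet Ti → Tm.priv (Tm.var x) ∈ stSet Ti → Tm.var x = t₂)
    (u : Tm) (h5 : u ∈ stSet Ti) (h5' : ¬ u.IsVar)
    (h6 : Deduce (Ti.image (Tm.subst θ)) (u.subst θ)) :
    Deduce (Ti ∪ extraVars C Ti) u := by
  have hbig := key C hC θ hθ Ti w hTi h1 h2 h3 h4 Ti.card Ti w hTi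
    (Finset.Subset.refl Ti) le_rfl
  exact (hbig.1 true (u.subst θ) (syn_of_deduce h6)).2 rfl |>.1 u h5' h5 rfl
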